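/- arXiv:1703.06942 — 3 statements merged into one kernel-verified Lean document; each statement's English description precedes it below -/
import Mathlib

section
/- The matrix polynomials P_n satisfy the first-order differentiation formula (1-x²) P_n'(x) = -n x P_n(x) - (n(α-β)/(α+β+2n)) T P_n(x) + γ_{n-1} P_{n-1}(x), where γ_{n-1} = 2(n+α)(n+β)/(α+β+2n) and T = [[0,1],[1,0]]. -/
open Matrix Real Finset

noncomputable section

attribute [local instance] Matrix.normedAddCommGroup Matrix.normedSpace

/-- The scalar Jacobi weight `w_{α,β}(x) = (1-x)^α (1+x)^β`. -/
def jacobiW (α β x : ℝ) : ℝ := (1 - x) ^ α * (1 + x) ^ β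

/-- The 2×2 Jacobi-type matrix weight `W_{(α,β)}`. -/
def Wmat (α β x : ℝ) : Matrix (Fin 2) (Fin 2) ℝ :=
  (1 / 2 : ℝ) •
    !![jacobiW α β x + jacobiW β α x, -jacobiW α β x + jacobiW β α x;
       -jacobiW α β x + jacobiW β α x, jacobiW α β x + jacobiW β α x]

/-- The permutation matrix `T`. -/
def Tmat : Matrix (Fin 2) (Fin 2) ℝ := !![0, 1; 1, 0]

/-- The classical Jacobi polynomial
`p_n^{(α,β)}(x) = ((α+1)_n / n!) ₂F₁(-n, n+α+β+1; α+1; (1-x)/2)` (a terminating sum). -/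
def jacobiP (α β : ℝ) (n : ℕ) (x : ℝ) : ℝ :=
  (ascPochhammer ℝ n).eval (α + 1) / (n.factorial : ℝ) *
    ∑ k ∈ Finset.range (n + 1),
      ((ascPochhammer ℝ k).eval (-(n : ℝ)) * (ascPochhammer ℝ k).eval ((n : ℝ) + α + β + 1)) /
        ((ascPochhammer ℝ k).eval (α + 1) * (k.factorial : ℝ)) * ((1 - x) / 2) ^ k

/-- The 2×2 matrix Jacobi-type orthogonal polynomial `P_n^{(α,β)}`. -/
def Pmat (α β : ℝ) (n : ℕ) (x : ℝ) : Matrix (Fin 2) (Fin 2) ℝ :=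
  (1 / 2 : ℝ) •
    !![jacobiP α β n x + jacobiP β α n x, -jacobiP α β n x + jacobiP β α n x;
       -jacobiP α β n x + jacobiP β α n x, jacobiP α β n x + jacobiP β α n x]

/-- The squared-norm constant `h_n`. -/
def hJ (α β : ℝ) (n : ℕ) : ℝ :=
  2 ^ (α + β + 1) * Real.Gamma (α + n + 1) * Real.Gamma (β + n + 1) /
    ((α + β + 2 * n + 1) * (n.factorial : ℝ) * Real.Gamma (α + β + n + 1))


/-!
In the variable `t = (1 - x) / 2` the Jacobi polynomial is `p_n^{(α,β)} = ∑ a_k t^k` with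
hypergeometric coefficients `a_k`, and `(1 - x²) d/dx = -(1 + x) t d/dt`. The scalar lowering
formula `(1 - x²) p_n' = (n(α-β)/(α+β+2n) - n x) p_n + γ_{n-1} p_{n-1}` therefore amounts to a
comparison of the coefficients of `t^k`, each of which is a rational identity between Pochhammer
symbols.

The matrix formula is two copies of the scalar one: `P_n = p_n^{(α,β)} E₋ + p_n^{(β,α)} E₊`, where
`E∓` are the spectral projections of `T` (`T E∓ = ∓E∓`), and exchanging `α` and `β` changes the sign
of `n(α-β)/(α+β+2n)` while fixing `γ_{n-1}`.
-/

theorem ascPochhammer_succ_eval_left {R : Type*} [CommSemiring R] (k : ℕ) (y : R) :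
    (ascPochhammer R (k + 1)).eval y = y * (ascPochhammer R k).eval (y + 1) := by
  simp [ascPochhammer_succ_left, Polynomial.eval_comp]

theorem sum_range_mul_pow_succ_eq {R : Type*} [Semiring R] {d e : ℕ → R} {N : ℕ}
    (he₀ : e 0 = 0) (he : ∀ k, e (k + 1) = d k) (hd : d N = 0) (t : R) :
    ∑ k ∈ range (N + 1), d k * t ^ (k + 1) = ∑ k ∈ range (N + 1), e k * t ^ k := by
  rw [sum_range_succ, hd, sum_range_succ', he₀]
  simp [he]

theorem one_sub_sq_mul_deriv_sum_mul_pow (a : ℕ → ℝ) (N : ℕ) (x : ℝ) :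
    (1 - x ^ 2) * deriv (fun y => ∑ k ∈ range N, a k * ((1 - y) / 2) ^ k) x =
      -(1 + x) * ∑ k ∈ range N, k * a k * ((1 - x) / 2) ^ k := by
  have ht : HasDerivAt (fun y : ℝ => (1 - y) / 2) (-1 / 2) x :=
    ((hasDerivAt_id x).const_sub 1).div_const 2
  rw [(HasDerivAt.fun_sum fun k _ => (ht.fun_pow k).const_mul (a k)).deriv, mul_sum, mul_sum]
  refine sum_congr rfl fun k _ => ?_
  rcases k with _ | k
  · simp
  · rw [Nat.add_sub_cancel]
    push_cast
    ring

namespace Jacobi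

variable (α β : ℝ)

def coeff (n k : ℕ) : ℝ :=
  (ascPochhammer ℝ n).eval (α + 1) / n.factorial *
    ((ascPochhammer ℝ k).eval (-(n : ℝ)) * (ascPochhammer ℝ k).eval ((n : ℝ) + α + β + 1) /
      ((ascPochhammer ℝ k).eval (α + 1) * k.factorial))

theorem jacobiP_eq_sum (n : ℕ) :
    jacobiP α β n = fun x => ∑ k ∈ range (n + 1), coeff α β n k * ((1 - x) / 2) ^ k := by
  ext x
  simp only [jacobiP, coeff, mul_sum, mul_assoc]

theorem coeff_eq_zero_of_lt {n k : ℕ} (h : n < k) : coeff α β n k = 0 := by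
  simp [coeff, ascPochhammer_eval_neg_coe_nat_of_lt h]

theorem differentiable_jacobiP (n : ℕ) : Differentiable ℝ (jacobiP α β n) := by
  rw [jacobiP_eq_sum]
  fun_prop

variable {α β : ℝ}

theorem coeff_lowering_zero {n : ℕ} (hn : n ≠ 0) (hs : α + β + 2 * n ≠ 0) :
    (n * (α - β) / (α + β + 2 * n) - n) * coeff α β n 0 +
      2 * (n + α) * (n + β) / (α + β + 2 * n) * coeff α β (n - 1) 0 = 0 := by
  obtain ⟨m, rfl⟩ := Nat.exists_eq_succ_of_ne_zero hn
  simp only [coeff, ascPochhammer_succ_eval, ascPochhammer_zero, Polynomial.eval_one,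
    Nat.factorial_succ, Nat.factorial_zero, Nat.succ_sub_one]
  push_cast at hs ⊢
  have hs' : α + β + (m + 1) * 2 ≠ 0 := by rwa [mul_comm] at hs
  field_simp
  ring

theorem coeff_lowering_succ (hα : -1 < α) {n : ℕ} (hn : n ≠ 0) (hs : α + β + 2 * n ≠ 0)
    (k : ℕ) :
    (n * (α - β) / (α + β + 2 * n) - n + 2 * (k + 1)) * coeff α β n (k + 1) +
        2 * (n + α) * (n + β) / (α + β + 2 * n) * coeff α β (n - 1) (k + 1) =
      2 * (k - n) * coeff α β n k := by
  obtain ⟨m, rfl⟩ := Nat.exists_eq_succ_of_ne_zero hn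
  simp only [coeff, Nat.succ_sub_one]
  push_cast at hs ⊢
  have hαk : α + 1 + k ≠ 0 := by have : (0 : ℝ) ≤ k := k.cast_nonneg; linarith
  have hshift_neg : (ascPochhammer ℝ (k + 1)).eval (-(m : ℝ)) * (m + 1) =
      (ascPochhammer ℝ k).eval (-((m : ℝ) + 1)) * (-((m : ℝ) + 1) + k) * (m - k) := by
    have h := ascPochhammer_succ_eval_left (k + 1) (-((m : ℝ) + 1))
    rw [ascPochhammer_succ_eval, ascPochhammer_succ_eval,
      show -((m : ℝ) + 1) + 1 = -m by ring] at h
    push_cast at h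
    linear_combination h
  have hshift_pos : (ascPochhammer ℝ (k + 1)).eval ((m : ℝ) + α + β + 1) =
      ((m : ℝ) + α + β + 1) * (ascPochhammer ℝ k).eval ((m : ℝ) + 1 + α + β + 1) := by
    rw [ascPochhammer_succ_eval_left]
    ring_nf
  rw [eq_div_of_mul_eq (by positivity) hshift_neg, hshift_pos,
    ascPochhammer_succ_eval (k := α + 1) m]
  simp only [ascPochhammer_succ_eval, Nat.factorial_succ]
  push_cast
  have hs' : α + β + (m + 1) * 2 ≠ 0 := by rwa [mul_comm] at hs
  field_simp
  ring

theorem one_sub_sq_mul_deriv_jacobiP (hα : -1 < α) {n : ℕ} (hn : n ≠ 0)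
    (hs : α + β + 2 * n ≠ 0) (x : ℝ) :
    (1 - x ^ 2) * deriv (jacobiP α β n) x =
      (n * (α - β) / (α + β + 2 * n) - n * x) * jacobiP α β n x +
        2 * (n + α) * (n + β) / (α + β + 2 * n) * jacobiP α β (n - 1) x := by
  have hprev : jacobiP α β (n - 1) x =
      ∑ k ∈ range (n + 1), coeff α β (n - 1) k * ((1 - x) / 2) ^ k := by
    rw [jacobiP_eq_sum, Nat.sub_add_cancel (Nat.one_le_iff_ne_zero.mpr hn), sum_range_succ,
      coeff_eq_zero_of_lt α β (Nat.sub_one_lt hn), zero_mul, add_zero]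
  rw [hprev, jacobiP_eq_sum, one_sub_sq_mul_deriv_sum_mul_pow]
  obtain ⟨t, rfl⟩ : ∃ t, x = 1 - 2 * t := ⟨(1 - x) / 2, by ring⟩
  rw [show (1 - (1 - 2 * t)) / 2 = t by ring, ← sub_eq_zero]
  -- comparing coefficients of `t ^ (k + 1)`
  have key := sum_range_mul_pow_succ_eq (R := ℝ) (N := n)
    (d := fun k => 2 * (k - n) * coeff α β n k)
    (e := fun k => (n * (α - β) / (α + β + 2 * n) - n + 2 * k) * coeff α β n k +
      2 * (n + α) * (n + β) / (α + β + 2 * n) * coeff α β (n - 1) k)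
    (by simpa using coeff_lowering_zero hn hs)
    (fun k => by push_cast; exact coeff_lowering_succ hα hn hs k) (by simp) t
  rw [← sub_eq_zero.mpr key]
  simp only [mul_sum, ← sum_add_distrib, ← sum_sub_distrib]
  exact sum_congr rfl fun k _ => by ring

def projNeg : Matrix (Fin 2) (Fin 2) ℝ := (1 / 2 : ℝ) • !![1, -1; -1, 1]

def projPos : Matrix (Fin 2) (Fin 2) ℝ := (1 / 2 : ℝ) • !![1, 1; 1, 1]

theorem Tmat_mul_projNeg : Tmat * projNeg = -projNeg := by
  ext i j; fin_cases i <;> fin_cases j <;> simp [Tmat, projNeg]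

theorem Tmat_mul_projPos : Tmat * projPos = projPos := by
  ext i j; fin_cases i <;> fin_cases j <;> simp [Tmat, projPos]

theorem Pmat_eq_smul_proj (α β : ℝ) (n : ℕ) :
    Pmat α β n = fun x => jacobiP α β n x • projNeg + jacobiP β α n x • projPos := by
  ext x i j
  fin_cases i <;> fin_cases j <;> simp [Pmat, projNeg, projPos] <;> ring

theorem deriv_Pmat (α β : ℝ) (n : ℕ) (x : ℝ) :
    deriv (Pmat α β n) x =
      deriv (jacobiP α β n) x • projNeg + deriv (jacobiP β α n) x • projPos := by
  rw [Pmat_eq_smul_proj]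
  exact (((differentiable_jacobiP α β n x).hasDerivAt.smul_const projNeg).add
    ((differentiable_jacobiP β α n x).hasDerivAt.smul_const projPos)).deriv

end Jacobi

open Jacobi in
/-- the first-order differentiation (lowering) formula
`(1-x²) P_n'(x) = -n x P_n(x) - (n(α-β)/(α+β+2n)) T P_n(x) + γ_{n-1} P_{n-1}(x)`,
with `γ_{n-1} = 2(n+α)(n+β)/(α+β+2n)`. -/
theorem Pmat_lowering (α β : ℝ) (hα : -1 < α) (hβ : -1 < β)
    (n : ℕ) (hn : 1 ≤ n) (x : ℝ) :
    (1 - x ^ 2) • deriv (Pmat α β n) x =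
      (-(n * x)) • Pmat α β n x - (n * (α - β) / (α + β + 2 * n)) • (Tmat * Pmat α β n x) +
        (2 * (n + α) * (n + β) / (α + β + 2 * n)) • Pmat α β (n - 1) x := by
  have hn₀ : n ≠ 0 := Nat.one_le_iff_ne_zero.mp hn
  have hs : α + β + 2 * n ≠ 0 := by
    have : (1 : ℝ) ≤ n := by exact_mod_cast hn
    linarith
  have hαβ := one_sub_sq_mul_deriv_jacobiP hα hn₀ hs x
  have hβα := one_sub_sq_mul_deriv_jacobiP (β := α) hβ hn₀ (by rwa [add_comm β]) x
  rw [deriv_Pmat]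
  simp only [Pmat_eq_smul_proj, mul_add, mul_smul_comm, Tmat_mul_projNeg, Tmat_mul_projPos]
  linear_combination (norm := module) hαβ • projNeg + hβα • projPos
end
end

section
/- For each n ≥ 0, the matrix polynomial P_n is an eigenfunction of the second-order matrix differential operator D defined by (fD)(x) = ((1-x²) f(x))'' + (f(x)(-x(α+β+2) Id + (α-β)T))', with scalar eigenvalue Λ_n = -n(n+α+β+1); equivalently, P_n''(x)(1-x²) + P_n'(x)(-x(α+β+2) Id + (α-β)T) = -n(n+α+β+1) P_n(x). -/
open Matrix Real Finset

noncomputable section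

attribute [local instance] Matrix.normedAddCommGroup Matrix.normedSpace

/-!
Write `P_n = p_n^{(α,β)} E₋ + p_n^{(β,α)} E₊`, where `E₋, E₊` (`projNeg`, `projPos`) are the
spectral projections of `T` for the eigenvalues `-1` and `1`. Right multiplication by `T` acts on
the two components as `∓1`, so the matrix equation splits into the scalar Jacobi equations for
`p_n^{(α,β)}` and `p_n^{(β,α)}`. Each of these is the hypergeometric equation for
`₂F₁(-n, n+α+β+1; α+1; t)` after the substitution `t = (1 - x) / 2`, and the hypergeometric
equation is equivalent to the two-term recurrence of the coefficients of the series.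
-/

open Polynomial

theorem hypergeometric_ode_of_coeff_rec {R : Type*} [CommRing R] {a b c : R} {F : R[X]}
    (hF : ∀ k : ℕ, ((k : R) + 1) * (k + c) * F.coeff (k + 1) = (k + a) * (k + b) * F.coeff k) :
    X * (1 - X) * derivative (derivative F) + (C c - C (a + b + 1) * X) * derivative F =
      C (a * b) * F := by
  ext k
  have hk := hF k
  rcases k with _ | _ | k <;>
  · simp only [mul_sub, sub_mul, mul_one, mul_assoc, coeff_add, coeff_sub, coeff_C_mul,
      coeff_X_mul, coeff_X_mul_zero, coeff_derivative] at hk ⊢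
    push_cast at hk ⊢
    linear_combination hk

theorem deriv_eval_smul_add_eval_smul {m n : Type*} [Fintype m] [Fintype n]
    (p q : ℝ[X]) (A B : Matrix m n ℝ) :
    deriv (fun x ↦ p.eval x • A + q.eval x • B) =
      fun x ↦ (derivative p).eval x • A + (derivative q).eval x • B :=
  funext fun x ↦ (((p.hasDerivAt x).smul_const A).add ((q.hasDerivAt x).smul_const B)).deriv

def jacobiHypCoeff (α β : ℝ) (n k : ℕ) : ℝ :=
  (ascPochhammer ℝ n).eval (α + 1) / n.factorial *
    ((ascPochhammer ℝ k).eval (-(n : ℝ)) * (ascPochhammer ℝ k).eval ((n : ℝ) + α + β + 1) /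
      ((ascPochhammer ℝ k).eval (α + 1) * k.factorial))

def jacobiHyp (α β : ℝ) (n : ℕ) : ℝ[X] :=
  ∑ k ∈ range (n + 1), C (jacobiHypCoeff α β n k) * X ^ k

theorem jacobiP_eq_eval_jacobiHyp (α β : ℝ) (n : ℕ) (x : ℝ) :
    jacobiP α β n x = (jacobiHyp α β n).eval ((1 - x) / 2) := by
  simp only [jacobiP, jacobiHyp, jacobiHypCoeff, eval_finsetSum, eval_mul, eval_C, eval_pow,
    eval_X, mul_sum, mul_assoc]

theorem jacobiHyp_coeff (α β : ℝ) (n k : ℕ) :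
    (jacobiHyp α β n).coeff k = if k ≤ n then jacobiHypCoeff α β n k else 0 := by
  simp [jacobiHyp]

theorem jacobiHypCoeff_succ (α β : ℝ) {n k : ℕ} (hk : k < n) :
    ((k : ℝ) + 1) * (k + (α + 1)) * jacobiHypCoeff α β n (k + 1) =
      (k + -(n : ℝ)) * (k + (n + α + β + 1)) * jacobiHypCoeff α β n k := by
  -- If `α + 1 + j = 0` for some `j < n`, the denominators vanish (and divide to `0`), but then
  -- so does the prefactor `(α + 1)ₙ`, and every coefficient is `0`.
  by_cases hK : (ascPochhammer ℝ n).eval (α + 1) = 0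
  · simp [jacobiHypCoeff, hK]
  have hne : ∀ j ≤ n, (ascPochhammer ℝ j).eval (α + 1) ≠ 0 := by
    intro j hj
    simp only [ne_eq, ascPochhammer_eval_eq_zero_iff, not_exists, not_and] at hK ⊢
    exact fun i hi ↦ hK i (by omega)
  have h₁ := hne k hk.le
  have h₂ : α + 1 + k ≠ 0 := right_ne_zero_of_mul
    (by simpa only [ascPochhammer_succ_eval] using hne (k + 1) hk)
  simp only [jacobiHypCoeff, ascPochhammer_succ_eval, Nat.factorial_succ]
  push_cast
  field_simp
  ring

theorem jacobiHyp_coeff_rec (α β : ℝ) (n k : ℕ) :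
    ((k : ℝ) + 1) * (k + (α + 1)) * (jacobiHyp α β n).coeff (k + 1) =
      (k + -(n : ℝ)) * (k + (n + α + β + 1)) * (jacobiHyp α β n).coeff k := by
  simp only [jacobiHyp_coeff]
  rcases lt_trichotomy k n with hk | rfl | hk
  · simp [hk, hk.le, Nat.succ_le_of_lt hk, jacobiHypCoeff_succ]
  · simp
  · simp [show ¬k < n by omega, show ¬k ≤ n by omega]

def jacobiPoly (α β : ℝ) (n : ℕ) : ℝ[X] :=
  (jacobiHyp α β n).comp (C (1 / 2) * (1 - X))

theorem jacobiP_eq_eval_jacobiPoly (α β : ℝ) (n : ℕ) :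
    jacobiP α β n = fun x ↦ (jacobiPoly α β n).eval x := by
  ext x
  rw [jacobiP_eq_eval_jacobiHyp, jacobiPoly, eval_comp]
  simp only [eval_mul, eval_C, eval_sub, eval_one, eval_X]
  ring_nf

theorem jacobiPoly_ode (α β : ℝ) (n : ℕ) :
    (1 - X ^ 2) * derivative (derivative (jacobiPoly α β n)) +
        (C (β - α) - C (α + β + 2) * X) * derivative (jacobiPoly α β n) =
      C (-(n * (n + α + β + 1))) * jacobiPoly α β n := by
  refine Polynomial.funext fun x ↦ ?_
  have h := congrArg (eval (1 / 2 * (1 - x)))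
    (hypergeometric_ode_of_coeff_rec (jacobiHyp_coeff_rec α β n))
  have hsub : derivative (C (1 / 2) * (1 - X) : ℝ[X]) = -C (1 / 2) := by simp
  simp only [jacobiPoly, derivative_comp, hsub, derivative_mul, derivative_neg, derivative_C,
    eval_zero, eval_comp, eval_add, eval_sub, eval_mul, eval_neg, eval_pow, eval_C,
    eval_X, eval_one] at h ⊢
  linear_combination h

def projNeg : Matrix (Fin 2) (Fin 2) ℝ := (1 / 2 : ℝ) • !![1, -1; -1, 1]

def projPos : Matrix (Fin 2) (Fin 2) ℝ := (1 / 2 : ℝ) • !![1, 1; 1, 1]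

theorem projNeg_mul_Tmat : projNeg * Tmat = -projNeg := by
  ext i j
  fin_cases i <;> fin_cases j <;> simp [projNeg, Tmat]

theorem projPos_mul_Tmat : projPos * Tmat = projPos := by
  ext i j
  fin_cases i <;> fin_cases j <;> simp [projPos, Tmat]

theorem Pmat_eq (α β : ℝ) (n : ℕ) :
    Pmat α β n =
      fun x ↦ (jacobiPoly α β n).eval x • projNeg + (jacobiPoly β α n).eval x • projPos := by
  ext x i j
  rw [Pmat, jacobiP_eq_eval_jacobiPoly, jacobiP_eq_eval_jacobiPoly]
  fin_cases i <;> fin_cases j <;> simp [projNeg, projPos] <;> ring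

theorem Pmat_eigenfunction_general (α β : ℝ) (n : ℕ) (x : ℝ) :
    (1 - x ^ 2) • deriv (deriv (Pmat α β n)) x +
        deriv (Pmat α β n) x *
          ((-(x * (α + β + 2))) • (1 : Matrix (Fin 2) (Fin 2) ℝ) + (α - β) • Tmat) =
      (-(n * (n + α + β + 1))) • Pmat α β n x := by
  have hp := congrArg (eval x) (jacobiPoly_ode α β n)
  have hq := congrArg (eval x) (jacobiPoly_ode β α n)
  simp only [eval_mul, eval_add, eval_sub, eval_pow, eval_one, eval_C, eval_X] at hp hq
  simp only [Pmat_eq, deriv_eval_smul_add_eval_smul]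
  simp only [add_mul, mul_add, smul_mul_assoc, mul_smul_comm, mul_one, projNeg_mul_Tmat,
    projPos_mul_Tmat, smul_neg]
  linear_combination (norm := module) hp • projNeg + hq • projPos

/-- `P_n` is an eigenfunction of the second-order differential operator `D`,
`P_n''(x)(1-x²) + P_n'(x)(-x(α+β+2) Id + (α-β)T) = -n(n+α+β+1) P_n(x)`. -/
theorem Pmat_eigenfunction (α β : ℝ) (hα : -1 < α) (hβ : -1 < β) (n : ℕ) (x : ℝ) :
    (1 - x ^ 2) • deriv (deriv (Pmat α β n)) x +
        deriv (Pmat α β n) x *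
          ((-(x * (α + β + 2))) • (1 : Matrix (Fin 2) (Fin 2) ℝ) + (α - β) • Tmat) =
      (-(n * (n + α + β + 1))) • Pmat α β n x :=
  Pmat_eigenfunction_general α β n x
end
end

section
/- The operator D = (d²/dx²)(1-x²) + (d/dx)(-x(α+β+2)Id + (α-β)T), acting on the right on 2×2 matrix functions, admits the factorization (fD)(x) = ( (f'(x)(1-x²)W(x))' ) W(x)^{-1}, i.e., for every twice differentiable matrix function f and x ∈ (-1,1): (f'(x)(1-x²)W(x))' = (f''(x)(1-x²) + f'(x)(-x(α+β+2)Id + (α-β)T)) W(x). -/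
/-!
On `(-1, 1)` the weight splits along the spectral projections of `T`:
`W = w_{α,β} P₋ + w_{β,α} P₊` with `T P₋ = -P₋` and `T P₊ = P₊`. Since
`(1 - x²) w_{α,β} = w_{α+1,β+1}`, one gets `((1 - x²) w_{α,β})' = (β - α - (α+β+2)x) w_{α,β}`,
and the sign flip of `α - β` between the two components is exactly what `(α - β) T` produces:
`((1 - x²) W)' = (-(α+β+2)x + (α-β)T) W`. The product rule then gives the factorization.
-/

open Matrix Real Finset

noncomputable section

attribute [local instance] Matrix.normedAddCommGroup Matrix.normedSpace

theorem HasDerivAt.matrix_mul {𝕜 : Type*} [NontriviallyNormedField 𝕜]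
    {m n p : Type*} [Fintype m] [Fintype n] [Fintype p]
    {A : 𝕜 → Matrix m n 𝕜} {B : 𝕜 → Matrix n p 𝕜} {A' : Matrix m n 𝕜} {B' : Matrix n p 𝕜}
    {x : 𝕜} (hA : HasDerivAt A A' x) (hB : HasDerivAt B B' x) :
    HasDerivAt (fun t => A t * B t) (A' * B x + A x * B') x := by
  have hAij (i : m) (k : n) : HasDerivAt (fun t => A t i k) (A' i k) x :=
    hasDerivAt_pi.1 (hasDerivAt_pi.1 hA i) k
  have hBij (k : n) (j : p) : HasDerivAt (fun t => B t k j) (B' k j) x :=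
    hasDerivAt_pi.1 (hasDerivAt_pi.1 hB k) j
  refine hasDerivAt_pi.2 fun i => hasDerivAt_pi.2 fun j => ?_
  simp only [Matrix.mul_apply, Matrix.add_apply, ← Finset.sum_add_distrib]
  exact HasDerivAt.fun_sum fun k _ => (hAij i k).fun_mul (hBij k j)

theorem one_sub_sq_mul_jacobiW (α β : ℝ) {t : ℝ} (ht : t ∈ Set.Ioo (-1 : ℝ) 1) :
    (1 - t ^ 2) * jacobiW α β t = jacobiW (α + 1) (β + 1) t := by
  have h₁ : 0 < 1 - t := by linarith [ht.2]
  have h₂ : 0 < 1 + t := by linarith [ht.1]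
  rw [jacobiW, jacobiW, Real.rpow_add_one h₁.ne', Real.rpow_add_one h₂.ne']
  ring

theorem hasDerivAt_jacobiW (α β : ℝ) {x : ℝ} (hx : x ∈ Set.Ioo (-1 : ℝ) 1) :
    HasDerivAt (jacobiW α β) ((β * (1 - x) - α * (1 + x)) * jacobiW (α - 1) (β - 1) x) x := by
  have h₁ : 0 < 1 - x := by linarith [hx.2]
  have h₂ : 0 < 1 + x := by linarith [hx.1]
  have hd₁ := ((hasDerivAt_id' x).const_sub 1).rpow_const (p := α) (Or.inl h₁.ne')
  have hd₂ := ((hasDerivAt_id' x).const_add 1).rpow_const (p := β) (Or.inl h₂.ne')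
  refine (hd₁.mul hd₂).congr_deriv ?_
  rw [jacobiW, Real.rpow_sub_one h₁.ne', Real.rpow_sub_one h₂.ne']
  field_simp
  ring

theorem hasDerivAt_one_sub_sq_mul_jacobiW (α β : ℝ) {x : ℝ} (hx : x ∈ Set.Ioo (-1 : ℝ) 1) :
    HasDerivAt (fun t => (1 - t ^ 2) * jacobiW α β t)
      ((β - α - (α + β + 2) * x) * jacobiW α β x) x := by
  have hd := hasDerivAt_jacobiW (α + 1) (β + 1) hx
  simp only [add_sub_cancel_right] at hd
  refine (hd.congr_of_eventuallyEq ?_).congr_deriv (by ring)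
  filter_upwards [Ioo_mem_nhds hx.1 hx.2] with t ht using one_sub_sq_mul_jacobiW α β ht

-- `P₋` and `P₊`: the spectral projections of `Tmat` for the eigenvalues `-1` and `1`.
def projNegT : Matrix (Fin 2) (Fin 2) ℝ := (1 / 2 : ℝ) • !![1, -1; -1, 1]

def projPosT : Matrix (Fin 2) (Fin 2) ℝ := (1 / 2 : ℝ) • !![1, 1; 1, 1]

theorem Tmat_mul_projNegT : Tmat * projNegT = -projNegT := by
  ext i j; fin_cases i <;> fin_cases j <;> simp [Tmat, projNegT, Matrix.mul_apply]

theorem Tmat_mul_projPosT : Tmat * projPosT = projPosT := by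
  ext i j; fin_cases i <;> fin_cases j <;> simp [Tmat, projPosT, Matrix.mul_apply]

theorem Wmat_eq_smul_projNegT_add_smul_projPosT (α β t : ℝ) :
    Wmat α β t = jacobiW α β t • projNegT + jacobiW β α t • projPosT := by
  ext i j; fin_cases i <;> fin_cases j <;> simp [Wmat, projNegT, projPosT] <;> ring

theorem hasDerivAt_one_sub_sq_smul_Wmat (α β : ℝ) {x : ℝ} (hx : x ∈ Set.Ioo (-1 : ℝ) 1) :
    HasDerivAt (fun t => (1 - t ^ 2) • Wmat α β t)
      (((-(x * (α + β + 2))) • (1 : Matrix (Fin 2) (Fin 2) ℝ) + (α - β) • Tmat) *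
        Wmat α β x) x := by
  have hd := ((hasDerivAt_one_sub_sq_mul_jacobiW α β hx).smul_const projNegT).add
    ((hasDerivAt_one_sub_sq_mul_jacobiW β α hx).smul_const projPosT)
  refine (hd.congr_of_eventuallyEq (.of_forall fun t => ?_)).congr_deriv ?_
  · simp only [Pi.add_apply, Wmat_eq_smul_projNegT_add_smul_projPosT, smul_add, smul_smul]
  · simp only [Wmat_eq_smul_projNegT_add_smul_projPosT, add_mul, mul_add, smul_mul_assoc,
      mul_smul_comm, one_mul, Tmat_mul_projNegT, Tmat_mul_projPosT]
    module

theorem D_factorization_general (α β : ℝ)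
    (f : ℝ → Matrix (Fin 2) (Fin 2) ℝ) (hf : ContDiff ℝ 2 f)
    (x : ℝ) (hx : x ∈ Set.Ioo (-1 : ℝ) 1) :
    deriv (fun t => deriv f t * ((1 - t ^ 2) • Wmat α β t)) x =
      ((1 - x ^ 2) • deriv (deriv f) x +
          deriv f x *
            ((-(x * (α + β + 2))) • (1 : Matrix (Fin 2) (Fin 2) ℝ) + (α - β) • Tmat)) *
        Wmat α β x := by
  have hf' : HasDerivAt (deriv f) (deriv (deriv f) x) x :=
    (hf.differentiable_deriv_two x).hasDerivAt
  refine (hf'.matrix_mul (hasDerivAt_one_sub_sq_smul_Wmat α β hx)).deriv.trans ?_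
  simp only [add_mul, mul_add, smul_mul_assoc, mul_smul_comm, Matrix.mul_assoc]

/-- the factorization of the operator `D`: for every twice differentiable
matrix function `f` and `x ∈ (-1,1)`,
`(f'(x)(1-x²)W(x))' = (f''(x)(1-x²) + f'(x)(-x(α+β+2)Id + (α-β)T)) W(x)`. -/
theorem D_factorization (α β : ℝ) (hα : -1 < α) (hβ : -1 < β)
    (f : ℝ → Matrix (Fin 2) (Fin 2) ℝ) (hf : ContDiff ℝ 2 f)
    (x : ℝ) (hx : x ∈ Set.Ioo (-1 : ℝ) 1) :
    deriv (fun t => deriv f t * ((1 - t ^ 2) • Wmat α β t)) x =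
      ((1 - x ^ 2) • deriv (deriv f) x +
          deriv f x *
            ((-(x * (α + β + 2))) • (1 : Matrix (Fin 2) (Fin 2) ℝ) + (α - β) • Tmat)) *
        Wmat α β x :=
  D_factorization_general α β f hf x hx
end
end
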